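/- arXiv:1109.0326 — 3 statements merged into one kernel-verified Lean document; each statement's English description precedes it below -/
import Mathlib

section
/- Let n ≥ 2 be an integer, a < b real, N ≥ 1 an integer, h = (b−a)/N, c ∈ ℝ, and let f : [a,b] → ℝ be such that f^{(n-1)} is absolutely continuous on [a,b]. Then ∫_a^b f(x) dx = (h/2)(f(a)+f(b)) + h Σ_{k=1}^{N-1} f(a+kh) + Σ_{k=2}^{n} (B_k/k!) h^k ( f^{(k-1)}(a) − f^{(k-1)}(b) ) + (−1)^{n-1} c h^n ( f^{(n-1)}(b) − f^{(n-1)}(a) ) + E^N_{(a,b)}(B_n(x)/n! + c, f). -/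
/-!
On a cell `[α, β]` of the grid, rescale to `[0, 1]` and integrate by parts `n` times against
`B_k(x)/k!`: since `(B_{k+1}/(k+1)!)' = B_k/k!`, `B_1(1) = -B_1(0) = 1/2`, `B_k(1) = B_k(0) = B_k`
for `k ≥ 2` and `B_k = 0` for odd `k ≥ 3`, this gives the Euler–Maclaurin formula with remainder
`E_{(α,β)}(B_n(x)/n!, f)`. The constant `c` adds to that remainder a multiple of
`∫_α^β f^{(n)} = f^{(n-1)}(β) - f^{(n-1)}(α)`. Summed over the `N` cells, interior nodes appear
twice in the trapezoid terms and the derivative terms telescope.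
-/

open MeasureTheory intervalIntegral Finset

/-- The `n`-th Bernoulli polynomial, evaluated at a real number `x`. -/
noncomputable def bernPoly (n : ℕ) (x : ℝ) : ℝ :=
  Polynomial.aeval x (Polynomial.bernoulli n)

/-- The `n`-th Bernoulli number `B_n = B_n(0)`, as a real number. -/
noncomputable def bernNum (n : ℕ) : ℝ := (bernoulli n : ℝ)

/-- The error term `E_{(a,b)}(p,f) = (-1)^n (b-a)^{n+1} ∫_0^1 p(x) f^{(n)}(a+(b-a)x) dx`,
where `p : ℝ → ℝ` plays the role of the polynomial and `fn : ℝ → ℝ` that of the `n`-th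
derivative of `f`. -/
noncomputable def errE (a b : ℝ) (n : ℕ) (p : ℝ → ℝ) (fn : ℝ → ℝ) : ℝ :=
  (-1 : ℝ) ^ n * (b - a) ^ (n + 1) * ∫ x in (0:ℝ)..1, p x * fn (a + (b - a) * x)

/-- The composite error `E^N_{(a,b)}(p,f) = Σ_{k=0}^{N-1} E_{(a+kh, a+(k+1)h)}(p,f)`,
where `h = (b-a)/N`. -/
noncomputable def errEN (a b : ℝ) (N : ℕ) (n : ℕ) (p : ℝ → ℝ) (fn : ℝ → ℝ) : ℝ :=
  ∑ k ∈ Finset.range N,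
    errE (a + k * ((b - a) / N)) (a + (k + 1) * ((b - a) / N)) n p fn

/-- `g` is absolutely continuous on `[a,b]` with a.e. derivative (the integrable function) `g'`:
`g x = g a + ∫_a^x g'` for all `x ∈ [a,b]`. -/
def ACOn (g g' : ℝ → ℝ) (a b : ℝ) : Prop :=
  IntervalIntegrable g' volume a b ∧
    ∀ x ∈ Set.Icc a b, g x = g a + ∫ t in a..x, g' t

lemma bernPoly_eq_eval (n : ℕ) (x : ℝ) :
    bernPoly n x = ((Polynomial.bernoulli n).map (algebraMap ℚ ℝ)).eval x := by
  rw [bernPoly, Polynomial.aeval_def, Polynomial.eval_map]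

lemma bernPoly_ratCast (n : ℕ) (q : ℚ) :
    bernPoly n q = ((Polynomial.bernoulli n).eval q : ℚ) := by
  rw [bernPoly, ← eq_ratCast (algebraMap ℚ ℝ), Polynomial.aeval_algebraMap_apply,
    Polynomial.coe_aeval_eq_eval, eq_ratCast]

lemma continuous_bernPoly (n : ℕ) : Continuous (bernPoly n) := by
  simpa only [funext (bernPoly_eq_eval n)] using Polynomial.continuous _

lemma bernPoly_eval_zero (n : ℕ) : bernPoly n 0 = bernNum n := by
  simpa [bernNum] using bernPoly_ratCast n 0

lemma bernPoly_eval_one (n : ℕ) : bernPoly n 1 = bernoulli' n := by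
  simpa using bernPoly_ratCast n 1

lemma bernPoly_zero_eval (x : ℝ) : bernPoly 0 x = 1 := by
  simp [bernPoly]

lemma hasDerivAt_bernPoly_succ_div_factorial (m : ℕ) (x : ℝ) :
    HasDerivAt (fun y => bernPoly (m + 1) y / (m + 1).factorial)
      (bernPoly m x / m.factorial) x := by
  have h := (Polynomial.hasDerivAt ((Polynomial.bernoulli (m + 1)).map (algebraMap ℚ ℝ)) x)
  rw [Polynomial.derivative_map, Polynomial.derivative_bernoulli_add_one] at h
  simp only [bernPoly_eq_eval]
  refine (h.div_const ((m + 1).factorial : ℝ)).congr_deriv ?_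
  simp only [Polynomial.map_mul, Polynomial.eval_mul, Polynomial.map_add, Polynomial.map_natCast,
    Polynomial.map_one, Polynomial.eval_add, Polynomial.eval_natCast, Polynomial.eval_one,
    Nat.factorial_succ, Nat.cast_mul, Nat.cast_succ]
  field_simp

lemma neg_one_pow_mul_bernNum {k : ℕ} (hk : k ≠ 1) : (-1 : ℝ) ^ k * bernNum k = bernNum k := by
  rcases k.even_or_odd with he | ho
  · rw [he.neg_one_pow, one_mul]
  · have hodd : 1 < k := by rcases ho with ⟨j, rfl⟩; omega
    simp [bernNum, bernoulli_eq_bernoulli'_of_ne_one hk, bernoulli'_eq_zero_of_odd ho hodd]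

namespace ACOn

variable {G w : ℝ → ℝ} {a b : ℝ}

lemma integral_eq_sub (h : ACOn G w a b) (hab : a ≤ b) : ∫ t in a..b, w t = G b - G a := by
  rw [h.2 b ⟨hab, le_rfl⟩]; ring

lemma continuousOn (h : ACOn G w a b) : ContinuousOn G (Set.Icc a b) := by
  have hprim : ContinuousOn (fun x => ∫ t in a..x, w t) (Set.uIcc a b) :=
    (h.1.absolutelyContinuousOnInterval_intervalIntegral Set.left_mem_uIcc).continuousOn
  exact (continuousOn_const.add (hprim.mono Set.Icc_subset_uIcc)).congr h.2

lemma mono (h : ACOn G w a b) {c d : ℝ} (hac : a ≤ c) (hcd : c ≤ d) (hdb : d ≤ b) :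
    ACOn G w c d := by
  have hsub : ∀ {u v}, a ≤ u → u ≤ v → v ≤ b → IntervalIntegrable w volume u v :=
    fun hau huv hvb => h.1.mono_set (by
      rw [Set.uIcc_of_le huv, Set.uIcc_of_le (hau.trans (huv.trans hvb))]
      exact Set.Icc_subset_Icc hau hvb)
  refine ⟨hsub hac hcd hdb, fun x hx => ?_⟩
  have hxb : x ≤ b := hx.2.trans hdb
  rw [h.2 x ⟨hac.trans hx.1, hxb⟩, h.2 c ⟨hac, hcd.trans hdb⟩, add_assoc,
    integral_add_adjacent_intervals (hsub le_rfl hac (hcd.trans hdb)) (hsub hac hx.1 hxb)]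

lemma const_mul (h : ACOn G w a b) (r : ℝ) : ACOn (fun x => r * G x) (fun x => r * w x) a b :=
  ⟨h.1.const_mul r, fun x hx => by
    dsimp only
    rw [h.2 x hx, intervalIntegral.integral_const_mul]
    ring⟩

lemma comp_affine (h : ACOn G w a b) (hab : a ≤ b) :
    ACOn (fun x => G (a + (b - a) * x)) (fun x => (b - a) * w (a + (b - a) * x)) 0 1 := by
  constructor
  · rcases eq_or_ne (b - a) 0 with hba | hba
    · simp [hba]
    · have := (h.1.comp_add_left a).comp_mul_left (c := b - a)
      simp only [sub_self, zero_div, div_self hba] at this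
      exact this.const_mul _
  · intro x hx
    have hmem : a + (b - a) * x ∈ Set.Icc a b := by
      constructor <;> nlinarith [hx.1, hx.2]
    have hcov := smul_integral_comp_add_mul (f := w) (a := 0) (b := x) (b - a) a
    rw [smul_eq_mul, mul_zero, add_zero] at hcov
    simp only [h.2 _ hmem, intervalIntegral.integral_const_mul, hcov, mul_zero, add_zero]

lemma integral_mul_deriv_eq_deriv_mul (h : ACOn G w a b) (hab : a ≤ b) {U U' : ℝ → ℝ}
    (hU : ∀ x, HasDerivAt U (U' x) x) (hU' : Continuous U') :
    ∫ t in a..b, U t * w t = U b * G b - U a * G a - ∫ t in a..b, U' t * G t := by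
  set V : ℝ → ℝ := fun x => ∫ t in a..x, w t
  have hV : AbsolutelyContinuousOnInterval V a b :=
    h.1.absolutelyContinuousOnInterval_intervalIntegral Set.left_mem_uIcc
  have hUac : AbsolutelyContinuousOnInterval U a b := by
    have : ContDiff ℝ 1 U := contDiff_one_iff_deriv.mpr
      ⟨fun x => (hU x).differentiableAt, by simpa only [funext fun x => (hU x).deriv] using hU'⟩
    exact this.contDiffOn.absolutelyContinuousOnInterval
  have hderivV : ∫ t in a..b, U t * w t = ∫ t in a..b, U t * deriv V t := by
    refine integral_congr_ae ?_
    filter_upwards [h.1.ae_hasDerivAt_integral] with x hx hxab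
    rw [(hx (Set.uIoc_subset_uIcc hxab) a Set.left_mem_uIcc).deriv]
  have hG : ∫ t in a..b, U' t * G t = G a * (U b - U a) + ∫ t in a..b, U' t * V t := by
    rw [← integral_eq_sub_of_hasDerivAt (fun x _ => hU x) (hU'.intervalIntegrable a b),
      ← intervalIntegral.integral_const_mul, ← intervalIntegral.integral_add]
    · refine integral_congr fun x hx => ?_
      rw [Set.uIcc_of_le hab] at hx
      simp only [h.2 x hx, V]
      ring
    · exact (hU'.intervalIntegrable a b).const_mul _
    · exact (hU'.continuousOn.mul hV.continuousOn).intervalIntegrable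
  rw [hderivV, hUac.integral_mul_deriv_eq_deriv_mul hV, hG, h.2 b ⟨hab, le_rfl⟩]
  simp only [funext fun x => (hU x).deriv, V, integral_same]
  ring

end ACOn

lemma acOn_derivWithin {G : ℝ → ℝ} {a b : ℝ} (hab : a ≤ b)
    (hG : DifferentiableOn ℝ G (Set.Icc a b))
    (hG' : ContinuousOn (derivWithin G (Set.Icc a b)) (Set.Icc a b)) :
    ACOn G (derivWithin G (Set.Icc a b)) a b := by
  refine ⟨hG'.intervalIntegrable_of_Icc hab, fun x hx => ?_⟩
  rw [integral_eq_sub_of_hasDeriv_right_of_le hx.1 (hG.continuousOn.mono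
      (Set.Icc_subset_Icc_right hx.2)) (fun t ht => ?_) ((hG'.mono
      (Set.Icc_subset_Icc_right hx.2)).intervalIntegrable_of_Icc hx.1)]
  · ring
  · exact ((hG t ⟨ht.1.le, ht.2.le.trans hx.2⟩).hasDerivWithinAt.hasDerivAt
      (Icc_mem_nhds ht.1 (ht.2.trans_le hx.2))).hasDerivWithinAt

lemma acOn_iteratedDerivWithin {f : ℝ → ℝ} {a b : ℝ} {k m : ℕ} (hab : a < b)
    (hf : ContDiffOn ℝ k f (Set.Icc a b)) (hm : m < k) :
    ACOn (iteratedDerivWithin m f (Set.Icc a b)) (iteratedDerivWithin (m + 1) f (Set.Icc a b))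
      a b := by
  have hs := uniqueDiffOn_Icc hab
  rw [iteratedDerivWithin_succ]
  refine acOn_derivWithin hab.le
    (hf.differentiableOn_iteratedDerivWithin (by exact_mod_cast hm) hs) ?_
  rw [← iteratedDerivWithin_succ]
  exact hf.continuousOn_iteratedDerivWithin (by exact_mod_cast hm) hs

lemma integral_bernPoly_mul_of_acOn {G w : ℝ → ℝ} (m : ℕ) (h : ACOn G w 0 1) :
    ∫ x in (0 : ℝ)..1, bernPoly (m + 1) x / (m + 1).factorial * w x =
      bernoulli' (m + 1) / (m + 1).factorial * G 1 - bernNum (m + 1) / (m + 1).factorial * G 0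
        - ∫ x in (0 : ℝ)..1, bernPoly m x / m.factorial * G x := by
  rw [h.integral_mul_deriv_eq_deriv_mul zero_le_one (hasDerivAt_bernPoly_succ_div_factorial m)
    ((continuous_bernPoly m).div_const _), bernPoly_eval_zero, bernPoly_eval_one]

theorem integral_unitInterval_eq_euler_maclaurin (ψ : ℕ → ℝ → ℝ) {n : ℕ} (hn : 1 ≤ n)
    (hψ : ∀ m < n, ACOn (ψ m) (ψ (m + 1)) 0 1) :
    ∫ x in (0 : ℝ)..1, ψ 0 x =
      (ψ 0 0 + ψ 0 1) / 2
        + ∑ k ∈ Finset.Icc 2 n, bernNum k / k.factorial * (ψ (k - 1) 0 - ψ (k - 1) 1)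
        + (-1) ^ n * ∫ x in (0 : ℝ)..1, bernPoly n x / n.factorial * ψ n x := by
  induction n, hn using Nat.le_induction with
  | base =>
    have h := integral_bernPoly_mul_of_acOn 0 (hψ 0 one_pos)
    rw [zero_add] at h
    rw [Finset.Icc_eq_empty (by norm_num), Finset.sum_empty, h]
    simp only [bernoulli'_one, bernNum, bernoulli_one, bernPoly_zero_eval, Nat.factorial_zero,
      Nat.factorial_one, Nat.cast_one, div_one, one_mul]
    push_cast
    ring
  | succ n hn ih =>
    have h := integral_bernPoly_mul_of_acOn n (hψ n n.lt_succ_self)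
    rw [ih fun m hm => hψ m (hm.trans n.lt_succ_self), Finset.sum_Icc_succ_top (by omega), h,
      ← bernoulli_eq_bernoulli'_of_ne_one (by omega : n + 1 ≠ 1), ← bernNum, Nat.add_sub_cancel]
    linear_combination (-(ψ n 1 - ψ n 0) / (n + 1).factorial) *
      neg_one_pow_mul_bernNum (by omega : n + 1 ≠ 1)

theorem integral_eq_bernoulli_rule_of_acOn (φ : ℕ → ℝ → ℝ) {n : ℕ} (hn : 1 ≤ n) {a b : ℝ}
    (hab : a ≤ b) (hφ : ∀ m < n, ACOn (φ m) (φ (m + 1)) a b) (c : ℝ) :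
    ∫ t in a..b, φ 0 t =
      (b - a) / 2 * (φ 0 a + φ 0 b)
        + ∑ k ∈ Finset.Icc 2 n, bernNum k / (k.factorial : ℝ) * (b - a) ^ k *
            (φ (k - 1) a - φ (k - 1) b)
        + (-1 : ℝ) ^ (n - 1) * c * (b - a) ^ n * (φ (n - 1) b - φ (n - 1) a)
        + errE a b n (fun x => bernPoly n x / (n.factorial : ℝ) + c) (φ n) := by
  -- rescaled to `[0, 1]`; the factor `(b - a) ^ (m + 1)` keeps `ψ (m + 1)` the derivative of `ψ m`
  set ψ : ℕ → ℝ → ℝ := fun m x => (b - a) ^ (m + 1) * φ m (a + (b - a) * x)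
  have hψ : ∀ m < n, ACOn (ψ m) (ψ (m + 1)) 0 1 := fun m hm => by
    simpa only [ψ, pow_succ, mul_assoc] using
      ((hφ m hm).comp_affine hab).const_mul ((b - a) ^ (m + 1))
  have hψ0 : ∀ m, ψ m 0 = (b - a) ^ (m + 1) * φ m a := by simp [ψ]
  have hψ1 : ∀ m, ψ m 1 = (b - a) ^ (m + 1) * φ m b := by simp [ψ]
  have hint : ∫ x in (0 : ℝ)..1, ψ 0 x = ∫ t in a..b, φ 0 t := by
    have hcov := smul_integral_comp_add_mul (f := φ 0) (a := 0) (b := 1) (b - a) a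
    rw [smul_eq_mul, mul_zero, add_zero, mul_one, add_sub_cancel,
      ← intervalIntegral.integral_const_mul] at hcov
    simpa only [ψ, zero_add, pow_one] using hcov
  obtain ⟨m, rfl⟩ : ∃ m, n = m + 1 := ⟨n - 1, by omega⟩
  have hlast : ∫ x in (0 : ℝ)..1, ψ (m + 1) x = (b - a) ^ (m + 1) * (φ m b - φ m a) := by
    rw [(hψ m m.lt_succ_self).integral_eq_sub zero_le_one, hψ0, hψ1]; ring
  have herr : errE a b (m + 1) (fun x => bernPoly (m + 1) x / ((m + 1).factorial : ℝ) + c)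
      (φ (m + 1)) = (-1) ^ (m + 1) * ((∫ x in (0 : ℝ)..1,
        bernPoly (m + 1) x / (m + 1).factorial * ψ (m + 1) x)
        + c * ∫ x in (0 : ℝ)..1, ψ (m + 1) x) := by
    have hψint := (hψ m m.lt_succ_self).1
    rw [errE, mul_assoc, ← intervalIntegral.integral_const_mul ((b - a) ^ (m + 1 + 1)),
      ← intervalIntegral.integral_const_mul c, ← intervalIntegral.integral_add
        (hψint.continuousOn_mul ((continuous_bernPoly _).div_const _).continuousOn)
        (hψint.const_mul c)]
    congr 1
    refine integral_congr fun x _ => ?_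
    simp only [ψ]
    ring
  have hsum : ∑ k ∈ Finset.Icc 2 (m + 1), bernNum k / k.factorial * (ψ (k - 1) 0 - ψ (k - 1) 1)
      = ∑ k ∈ Finset.Icc 2 (m + 1), bernNum k / (k.factorial : ℝ) * (b - a) ^ k *
            (φ (k - 1) a - φ (k - 1) b) := by
    refine Finset.sum_congr rfl fun k hk => ?_
    rw [hψ0, hψ1, Nat.sub_add_cancel (by simp at hk; omega)]
    ring
  rw [← hint, integral_unitInterval_eq_euler_maclaurin ψ hn hψ, hsum, herr, hlast, hψ0, hψ1,
    Nat.add_sub_cancel]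
  ring

lemma sum_range_add_succ_eq {N : ℕ} (hN : 1 ≤ N) (u : ℕ → ℝ) :
    ∑ j ∈ Finset.range N, (u j + u (j + 1)) =
      u 0 + u N + 2 * ∑ k ∈ Finset.Icc 1 (N - 1), u k := by
  obtain ⟨M, rfl⟩ : ∃ M, N = M + 1 := ⟨N - 1, by omega⟩
  have hIcc : ∑ k ∈ Finset.Icc 1 M, u k = ∑ j ∈ Finset.range M, u (j + 1) := by
    rw [← Finset.Ico_add_one_right_eq_Icc, Finset.sum_Ico_eq_sum_range]
    simp only [add_tsub_cancel_right, add_comm 1]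
  rw [Finset.sum_add_distrib, Finset.sum_range_succ', Finset.sum_range_succ (fun j => u (j + 1)),
    Nat.add_sub_cancel, hIcc]
  ring

theorem integral_eq_composite_bernoulli_rule_of_acOn (φ : ℕ → ℝ → ℝ) {n : ℕ} (hn : 1 ≤ n)
    {a b : ℝ} (hab : a ≤ b) {N : ℕ} (hN : 1 ≤ N) (hφ : ∀ m < n, ACOn (φ m) (φ (m + 1)) a b)
    (c : ℝ) :
    ∫ x in a..b, φ 0 x =
      ((b - a) / N) / 2 * (φ 0 a + φ 0 b)
        + ((b - a) / N) * ∑ k ∈ Finset.Icc 1 (N - 1), φ 0 (a + k * ((b - a) / N))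
        + ∑ k ∈ Finset.Icc 2 n, bernNum k / (k.factorial : ℝ) * ((b - a) / N) ^ k *
            (φ (k - 1) a - φ (k - 1) b)
        + (-1 : ℝ) ^ (n - 1) * c * ((b - a) / N) ^ n * (φ (n - 1) b - φ (n - 1) a)
        + errEN a b N n (fun x => bernPoly n x / (n.factorial : ℝ) + c) (φ n) := by
  set h := (b - a) / N
  set x : ℕ → ℝ := fun j => a + j * h
  have hN' : (0 : ℝ) < N := by exact_mod_cast hN
  have hh : 0 ≤ h := div_nonneg (sub_nonneg.mpr hab) hN'.le
  have hx0 : x 0 = a := by simp [x]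
  have hxN : x N = b := by simp only [x, h]; field_simp; ring
  have hx_succ : ∀ j : ℕ, x (j + 1) = a + ((j : ℝ) + 1) * h := by simp [x]
  have hx_mem : ∀ j ≤ N, a ≤ x j ∧ x j ≤ b := fun j hj => by
    have : (j : ℝ) ≤ N := by exact_mod_cast hj
    refine ⟨le_add_of_nonneg_right (by positivity), ?_⟩
    rw [← hxN]; simp only [x]; gcongr
  have hx_step : ∀ j, x (j + 1) - x j = h := fun j => by simp only [x]; push_cast; ring
  have hx_le : ∀ j, x j ≤ x (j + 1) := fun j => sub_nonneg.mp ((hx_step j).symm ▸ hh)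
  have hlocal : ∀ j ∈ Finset.range N, ∫ t in x j..x (j + 1), φ 0 t =
      h / 2 * (φ 0 (x j) + φ 0 (x (j + 1)))
        + ∑ k ∈ Finset.Icc 2 n, bernNum k / (k.factorial : ℝ) * h ^ k *
            (φ (k - 1) (x j) - φ (k - 1) (x (j + 1)))
        + (-1 : ℝ) ^ (n - 1) * c * h ^ n * (φ (n - 1) (x (j + 1)) - φ (n - 1) (x j))
        + errE (x j) (x (j + 1)) n (fun x => bernPoly n x / (n.factorial : ℝ) + c) (φ n) :=
    fun j hj => by
      have hj := Finset.mem_range.mp hj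
      rw [← hx_step j]
      exact integral_eq_bernoulli_rule_of_acOn φ hn (hx_le j) (fun m hm =>
        (hφ m hm).mono (hx_mem j hj.le).1 (hx_le j) (hx_mem (j + 1) hj).2) c
  have hsplit : ∫ t in a..b, φ 0 t = ∑ j ∈ Finset.range N, ∫ t in x j..x (j + 1), φ 0 t := by
    rw [← hx0, ← hxN, sum_integral_adjacent_intervals fun j hj => ?_]
    exact ((hφ 0 hn).continuousOn.mono (Set.Icc_subset_Icc (hx_mem j hj.le).1
      (hx_mem (j + 1) hj).2)).intervalIntegrable_of_Icc (hx_le j)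
  have htrapezoid : ∑ j ∈ Finset.range N, h / 2 * (φ 0 (x j) + φ 0 (x (j + 1))) =
      h / 2 * (φ 0 a + φ 0 b) + h * ∑ k ∈ Finset.Icc 1 (N - 1), φ 0 (x k) := by
    rw [← Finset.mul_sum, sum_range_add_succ_eq hN, hx0, hxN]
    ring
  have hbernoulli : ∑ j ∈ Finset.range N, ∑ k ∈ Finset.Icc 2 n,
        bernNum k / (k.factorial : ℝ) * h ^ k * (φ (k - 1) (x j) - φ (k - 1) (x (j + 1))) =
      ∑ k ∈ Finset.Icc 2 n, bernNum k / (k.factorial : ℝ) * h ^ k *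
        (φ (k - 1) a - φ (k - 1) b) := by
    rw [Finset.sum_comm]
    simp_rw [← Finset.mul_sum, Finset.sum_range_sub' (fun j => φ (_ - 1) (x j)), hx0, hxN]
  have hconst : ∑ j ∈ Finset.range N,
        (-1 : ℝ) ^ (n - 1) * c * h ^ n * (φ (n - 1) (x (j + 1)) - φ (n - 1) (x j)) =
      (-1 : ℝ) ^ (n - 1) * c * h ^ n * (φ (n - 1) b - φ (n - 1) a) := by
    rw [← Finset.mul_sum, Finset.sum_range_sub (fun j => φ (n - 1) (x j)), hx0, hxN]
  rw [hsplit, Finset.sum_congr rfl hlocal, Finset.sum_add_distrib, Finset.sum_add_distrib,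
    Finset.sum_add_distrib, htrapezoid, hbernoulli, hconst]
  simp only [errEN, hx_succ]
  rfl

/-- The composite quadrature rule generated by `B_n(x)/n! + c`:
for `n ≥ 2`, `a < b`, `N ≥ 1`, `h = (b−a)/N`, `c ∈ ℝ` and `f` with `f^{(n-1)}` absolutely
continuous on `[a,b]`,
`∫_a^b f = (h/2)(f(a)+f(b)) + h Σ_{k=1}^{N-1} f(a+kh)
  + Σ_{k=2}^{n} (B_k/k!) h^k (f^{(k-1)}(a) − f^{(k-1)}(b))
  + (−1)^{n-1} c h^n (f^{(n-1)}(b) − f^{(n-1)}(a)) + E^N_{(a,b)}(B_n(x)/n! + c, f)`. -/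
theorem composite_telescoping_rule (n : ℕ) (hn : 2 ≤ n) (a b : ℝ) (hab : a < b)
    (N : ℕ) (hN : 1 ≤ N) (c : ℝ)
    (f : ℝ → ℝ) (hreg : ContDiffOn ℝ (n - 1 : ℕ) f (Set.Icc a b))
    (hAC : ACOn (iteratedDerivWithin (n - 1) f (Set.Icc a b))
      (iteratedDerivWithin n f (Set.Icc a b)) a b) :
    ∫ x in a..b, f x =
      ((b - a) / N) / 2 * (f a + f b)
        + ((b - a) / N) * ∑ k ∈ Finset.Icc 1 (N - 1), f (a + k * ((b - a) / N))
        + ∑ k ∈ Finset.Icc 2 n, bernNum k / (k.factorial : ℝ) * ((b - a) / N) ^ k *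
            (iteratedDerivWithin (k - 1) f (Set.Icc a b) a -
              iteratedDerivWithin (k - 1) f (Set.Icc a b) b)
        + (-1 : ℝ) ^ (n - 1) * c * ((b - a) / N) ^ n *
            (iteratedDerivWithin (n - 1) f (Set.Icc a b) b -
              iteratedDerivWithin (n - 1) f (Set.Icc a b) a)
        + errEN a b N n (fun x => bernPoly n x / (n.factorial : ℝ) + c)
            (iteratedDerivWithin n f (Set.Icc a b)) := by
  have hφ : ∀ m < n, ACOn (iteratedDerivWithin m f (Set.Icc a b))
      (iteratedDerivWithin (m + 1) f (Set.Icc a b)) a b := fun m hm => by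
    rcases Nat.lt_or_ge m (n - 1) with hlt | hge
    · exact acOn_iteratedDerivWithin hab hreg hlt
    · obtain rfl : m = n - 1 := by omega
      rwa [Nat.sub_add_cancel (by omega)]
  simpa only [iteratedDerivWithin_zero] using
    integral_eq_composite_bernoulli_rule_of_acOn (fun m => iteratedDerivWithin m f (Set.Icc a b))
      (by omega) hab.le hN hφ c
end

section
/- Let n ≥ 1 be an odd integer. Then for every constant c ∈ ℝ, ‖p_n‖_∞ ≤ ‖p_n + c‖_∞, i.e. max_{x∈[0,1]} |B_n(x)/n!| ≤ max_{x∈[0,1]} |B_n(x)/n! + c|. -/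
/-- `p_n(x) = B_n(x)/n!`. -/
noncomputable def pB (n : ℕ) (x : ℝ) : ℝ := bernPoly n x / (n.factorial : ℝ)

/-- The sup norm `‖g‖_∞ = max_{x∈[0,1]} |g(x)|`. -/
noncomputable def normInf (g : ℝ → ℝ) : ℝ :=
  sSup ((fun x => |g x|) '' Set.Icc (0:ℝ) 1)

/-!
The reflection `B_n(1 - x) = (-1)^n B_n(x)` makes `p_n` odd about `1/2` when `n` is odd. For such a
function `g` and any `x ∈ [0,1]`, both `x` and `1 - x` lie in `[0,1]`, and
`2 |g x| = |(g x + c) - (g (1 - x) + c)| ≤ 2 ‖g + c‖_∞`.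
-/

open Set

lemma bernPoly_one_sub (n : ℕ) (x : ℝ) : bernPoly n (1 - x) = (-1) ^ n * bernPoly n x := by
  simpa [bernPoly, Polynomial.aeval_comp] using
    congrArg (Polynomial.aeval x) (Polynomial.bernoulli_comp_one_sub_X n)

lemma pB_one_sub_of_odd {n : ℕ} (hodd : Odd n) (x : ℝ) : pB n (1 - x) = -pB n x := by
  rw [pB, pB, bernPoly_one_sub, hodd.neg_one_pow, neg_one_mul, neg_div]

lemma continuous_pB (n : ℕ) : Continuous (pB n) :=
  ((Polynomial.bernoulli n).continuous_aeval (A := ℝ)).div_const _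

lemma abs_le_normInf {g : ℝ → ℝ} (hg : ContinuousOn g (Icc 0 1)) {x : ℝ} (hx : x ∈ Icc 0 1) :
    |g x| ≤ normInf g :=
  le_csSup ((isCompact_Icc.image_of_continuousOn hg.abs).bddAbove) ⟨x, hx, rfl⟩

lemma normInf_le_of_forall_abs_le {g : ℝ → ℝ} {M : ℝ} (h : ∀ x ∈ Icc (0 : ℝ) 1, |g x| ≤ M) :
    normInf g ≤ M :=
  csSup_le ((nonempty_Icc.mpr zero_le_one).image _) (forall_mem_image.mpr h)

lemma normInf_le_normInf_add_const_of_map_one_sub_eq_neg {g : ℝ → ℝ} (hg : ContinuousOn g (Icc 0 1))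
    (hsymm : ∀ x ∈ Icc (0 : ℝ) 1, g (1 - x) = -g x) (c : ℝ) :
    normInf g ≤ normInf (fun x => g x + c) := by
  have hgc : ContinuousOn (fun x => g x + c) (Icc 0 1) := hg.add continuousOn_const
  refine normInf_le_of_forall_abs_le fun x hx => ?_
  have hx' : 1 - x ∈ Icc (0 : ℝ) 1 := ⟨by linarith [hx.2], by linarith [hx.1]⟩
  have h₁ := abs_le_normInf hgc hx
  have h₂ := abs_le_normInf hgc hx'
  rw [hsymm x hx] at h₂
  calc |g x| = |(g x + c) - (-g x + c)| / 2 := by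
        rw [show (g x + c) - (-g x + c) = 2 * g x by ring, abs_mul, abs_two]; ring
    _ ≤ (|g x + c| + |-g x + c|) / 2 := by gcongr; exact abs_sub _ _
    _ ≤ normInf (fun x => g x + c) := by linarith

theorem sup_norm_pB_odd_min_general (n : ℕ) (hodd : Odd n) (c : ℝ) :
    normInf (pB n) ≤ normInf (fun x => pB n x + c) :=
  normInf_le_normInf_add_const_of_map_one_sub_eq_neg (continuous_pB n).continuousOn
    (fun x _ => pB_one_sub_of_odd hodd x) c

/-- For odd `n ≥ 1` and every `c ∈ ℝ`,
`max_{x∈[0,1]} |B_n(x)/n!| ≤ max_{x∈[0,1]} |B_n(x)/n! + c|`. -/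
theorem sup_norm_pB_odd_min (n : ℕ) (hn : 1 ≤ n) (hodd : Odd n) (c : ℝ) :
    normInf (pB n) ≤ normInf (fun x => pB n x + c) :=
  sup_norm_pB_odd_min_general n hodd c
end

section
/- As n → ∞, ‖p_n‖_1 ∼ 8/(2π)^{n+1}; that is, lim_{n→∞} (2π)^{n+1} · (∫_0^1 |B_n(x)| dx) / (8 · n!) = 1. -/
/-! Up to a unimodular factor, the Fourier expansion of the Bernoulli polynomials reads
`(2π)ⁿ/n! · Bₙ(x) = ∑_{j ≥ 1} j⁻ⁿ (e(jx) + (-1)ⁿ e(-jx))` on `[0, 1]`. The term `j = 1` has modulus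
`2 |cos (2πx - nπ/2)|`, whose integral over `[0, 1]` is `4/π` whatever the phase, and the other
terms contribute at most `2 (ζ(n) - 1) → 0`. Hence `∫₀¹ (2π)ⁿ/n! · |Bₙ| → 4/π`. -/

open Filter Real MeasureTheory intervalIntegral

open Set Nat Topology

lemma bernPoly_eq_bernoulliFun (n : ℕ) : bernPoly n = bernoulliFun n := by
  ext x
  rw [bernPoly, bernoulliFun, Polynomial.aeval_def, Polynomial.eval_map]

lemma norm_sub_le_of_hasSum_of_eq_zero {E : Type*} [SeminormedAddCommGroup E] {f : ℕ → E}
    {s : E} {b : ℕ → ℝ} {B : ℝ} (hf : HasSum f s) (hf₀ : f 0 = 0) (hb : HasSum b B)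
    (hfb : ∀ j, ‖f (j + 2)‖ ≤ b j) : ‖s - f 1‖ ≤ B := by
  have htail : HasSum (fun j ↦ f (j + 2)) (s - f 1) := by
    simpa [Finset.sum_range_succ, hf₀] using (hasSum_nat_add_iff' 2).mpr hf
  exact htail.norm_le_of_bounded hb hfb

lemma summable_one_div_nat_add_two_pow {k : ℕ} (hk : 2 ≤ k) :
    Summable (fun j : ℕ ↦ 1 / ((j + 2 : ℕ) : ℝ) ^ k) :=
  (summable_nat_add_iff 2).mpr (Real.summable_one_div_nat_pow.mpr hk)

noncomputable def zetaTail (n : ℕ) : ℝ := ∑' j : ℕ, 1 / ((j + 2 : ℕ) : ℝ) ^ n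

lemma tendsto_zetaTail_atTop : Tendsto zetaTail atTop (𝓝 0) := by
  have hsum := summable_one_div_nat_add_two_pow le_rfl
  have hterm (j : ℕ) : Tendsto (fun n : ℕ ↦ 1 / ((j + 2 : ℕ) : ℝ) ^ n) atTop (𝓝 0) := by
    simp_rw [← one_div_pow]
    exact tendsto_pow_atTop_nhds_zero_of_lt_one (by positivity)
      ((div_lt_one (by positivity)).mpr (by norm_cast; omega))
  rw [← tsum_zero]
  exact tendsto_tsum_of_dominated_convergence hsum hterm <|
    (eventually_ge_atTop 2).mono fun n hn j ↦ by
      rw [Real.norm_of_nonneg (by positivity)]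
      exact one_div_pow_le_one_div_pow_of_le (by norm_cast; omega) hn

lemma fourier_one_add_neg_one_pow_mul_fourier_neg_one (k : ℕ) (x : ℝ) :
    fourier 1 (x : UnitAddCircle) + (-1) ^ k * fourier (-1) (x : UnitAddCircle) =
      Complex.exp ((k * π / 2 : ℝ) * Complex.I) * (2 * (cos (2 * π * x - k * π / 2) : ℝ)) := by
  rw [Complex.ofReal_cos, Complex.two_cos, fourier_coe_apply, fourier_coe_apply,
    ← Complex.exp_pi_mul_I, ← Complex.exp_nat_mul, mul_add, ← Complex.exp_add, ← Complex.exp_add,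
    ← Complex.exp_add]
  push_cast
  ring_nf

lemma norm_fourier_one_add_neg_one_pow_mul_fourier_neg_one (k : ℕ) (x : ℝ) :
    ‖fourier 1 (x : UnitAddCircle) + (-1) ^ k * fourier (-1) (x : UnitAddCircle)‖ =
      2 * |cos (2 * π * x - k * π / 2)| := by
  rw [fourier_one_add_neg_one_pow_mul_fourier_neg_one, norm_mul, Complex.norm_exp_ofReal_mul_I,
    norm_mul, Complex.norm_real, Real.norm_eq_abs, one_mul, Complex.norm_two]

lemma integral_abs_cos_two_pi_mul_sub (c : ℝ) :
    ∫ x in (0 : ℝ)..1, |cos (2 * π * x - c)| = 2 / π := by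
  have hper : Function.Periodic (fun x ↦ |cos x|) π := fun x ↦ by simp [cos_add_pi]
  have hperiod : ∫ x in -c..-c + π, |cos x| = 2 := by
    rw [hper.intervalIntegral_add_eq (-c) (-(π / 2)), show -(π / 2) + π = π / 2 by ring,
      integral_congr (g := cos) fun x hx ↦ abs_of_nonneg (cos_nonneg_of_mem_Icc ?_), integral_cos]
    · simp
      ring
    · rwa [uIcc_of_le (by linarith [pi_pos])] at hx
  have htwo := hper.intervalIntegral_add_zsmul_eq 2 (-c)
    fun a b ↦ continuous_cos.abs.intervalIntegrable a b
  rw [integral_comp_mul_sub (fun x ↦ |cos x|) (by positivity : 2 * π ≠ 0)]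
  simp only [mul_zero, zero_sub, mul_one]
  rw [show 2 * π - c = -c + (2 : ℤ) • π by ring, htwo, hperiod, smul_eq_mul]
  field_simp
  norm_num

lemma abs_bernoulliFun_sub_leading_mode_le {k : ℕ} (hk : 2 ≤ k) {x : ℝ}
    (hx : x ∈ Icc (0 : ℝ) 1) :
    abs ((2 * π) ^ k / k ! * |bernoulliFun k x| - 2 * |cos (2 * π * x - k * π / 2)|)
      ≤ 2 * zetaTail k := by
  have hsum := hasSum_one_div_nat_pow_mul_fourier hk hx
  have hnorm : ‖-(2 * π * Complex.I) ^ k / k ! * bernoulliFun k x‖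
      = (2 * π) ^ k / k ! * |bernoulliFun k x| := by
    simp [abs_of_pos pi_pos]
  have hterm (j : ℕ) : ‖1 / (j : ℂ) ^ k * (fourier j (x : UnitAddCircle)
      + (-1) ^ k * fourier (-j) (x : UnitAddCircle))‖ ≤ 2 * (1 / (j : ℝ) ^ k) := by
    have hmode : ‖fourier j (x : UnitAddCircle) + (-1) ^ k * fourier (-j) (x : UnitAddCircle)‖
        ≤ 2 := by
      refine (norm_add_le _ _).trans_eq ?_
      rw [norm_mul, norm_pow, norm_neg, norm_one, one_pow, one_mul, fourier_apply, fourier_apply,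
        Circle.norm_coe, Circle.norm_coe, one_add_one_eq_two]
    rw [norm_mul, mul_comm]
    gcongr
    simp
  rw [← hnorm, ← norm_fourier_one_add_neg_one_pow_mul_fourier_neg_one]
  have key := norm_sub_le_of_hasSum_of_eq_zero hsum (by simp [zero_pow (by omega : k ≠ 0)])
    ((summable_one_div_nat_add_two_pow hk).hasSum.mul_left 2) (fun j ↦ hterm (j + 2))
  simp only [Nat.cast_one, one_pow, div_one, one_mul] at key
  exact (abs_norm_sub_norm_le _ _).trans key

lemma abs_integral_abs_bernoulliFun_sub_four_div_pi_le {n : ℕ} (hn : 2 ≤ n) :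
    |(∫ x in (0 : ℝ)..1, (2 * π) ^ n / n ! * |bernoulliFun n x|) - 4 / π|
      ≤ 2 * zetaTail n := by
  have hmode : ∫ x in (0 : ℝ)..1, 2 * |cos (2 * π * x - n * π / 2)| = 4 / π := by
    rw [intervalIntegral.integral_const_mul, integral_abs_cos_two_pi_mul_sub]
    ring
  rw [← hmode, ← intervalIntegral.integral_sub, ← Real.norm_eq_abs]
  · refine (intervalIntegral.norm_integral_le_of_norm_le_const (C := 2 * zetaTail n)
      fun x hx ↦ ?_).trans_eq (by simp)
    rw [uIoc_of_le zero_le_one] at hx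
    exact abs_bernoulliFun_sub_leading_mode_le hn (Ioc_subset_Icc_self hx)
  all_goals exact Continuous.intervalIntegrable (by fun_prop) _ _

lemma tendsto_integral_abs_bernoulliFun :
    Tendsto (fun n : ℕ ↦ ∫ x in (0 : ℝ)..1, (2 * π) ^ n / n ! * |bernoulliFun n x|) atTop
      (𝓝 (4 / π)) := by
  refine tendsto_iff_norm_sub_tendsto_zero.mpr <|
    squeeze_zero' (.of_forall fun n ↦ norm_nonneg _) ((eventually_ge_atTop 2).mono
      fun n hn ↦ abs_integral_abs_bernoulliFun_sub_four_div_pi_le hn) ?_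
  simpa using tendsto_zetaTail_atTop.const_mul 2

/-- `‖p_n‖_1 ∼ 8/(2π)^{n+1}` as `n → ∞`; that is,
`lim_{n→∞} (2π)^{n+1} · (∫_0^1 |B_n(x)| dx) / (8·n!) = 1`. -/
theorem L1_norm_pB_asymptotics :
    Tendsto
      (fun n : ℕ =>
        (2 * π) ^ (n + 1) * (∫ x in (0:ℝ)..1, |bernPoly n x|) /
          (8 * (n.factorial : ℝ)))
      atTop (nhds 1) := by
  have h := tendsto_integral_abs_bernoulliFun.const_mul (π / 4)
  rw [show π / 4 * (4 / π) = 1 by field_simp] at h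
  refine h.congr fun n ↦ ?_
  rw [bernPoly_eq_bernoulliFun, intervalIntegral.integral_const_mul]
  field_simp
  ring
end
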